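/- With V = S × Ω and Ω acting by ω·(s,ω') = (s, ωω'), the operators ↑^ω τ := Σ_{v∈N_τ} ↑_v^ω τ form a family of commuting derivations for all pre-Lie products ▷^{a,ω'}: that is, ↑^ω(σ ▷^{a,ω'} τ) = (↑^ω σ) ▷^{a,ω'} τ + σ ▷^{a,ω'} (↑^ω τ), and ↑^ω ∘ ↑^{ω'} = ↑^{ω'} ∘ ↑^ω. -/

import Mathlib

/-- Planar rooted trees with vertex decorations in `V` and edge decorations in `E`. -/
inductive RT (V E : Type) : Type where
  | node : V → List (E × RT V E) → RT V E

/-- One-step reordering of children (at the root or at a deeper vertex). -/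
inductive Swap {V E : Type} : RT V E → RT V E → Prop where
  | here (v : V) (l₁ l₂ : List (E × RT V E)) (p q : E × RT V E) :
      Swap (.node v (l₁ ++ p :: q :: l₂)) (.node v (l₁ ++ q :: p :: l₂))
  | child (v : V) (l₁ l₂ : List (E × RT V E)) (e : E) {t t' : RT V E} :
      Swap t t' → Swap (.node v (l₁ ++ (e, t) :: l₂)) (.node v (l₁ ++ (e, t') :: l₂))

/-- (Non-planar) decorated rooted trees: planar trees modulo reordering of children. -/
def QT (V E : Type) : Type := Quot (@Swap V E)

/-- The linear span of decorated rooted trees, with rational coefficients. -/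
abbrev Span (V E : Type) : Type := QT V E →₀ ℚ

def qt {V E : Type} (t : RT V E) : QT V E := Quot.mk _ t

/-- A tree, as a basis vector of the span. -/
noncomputable def bas {V E : Type} (t : RT V E) : Span V E := Finsupp.single (qt t) 1

/-- The element of the span given by a list of trees (sum with multiplicity). -/
noncomputable def ofList {V E : Type} (l : List (RT V E)) : Span V E := (l.map bas).sum

/-- Formal rational combination of planar trees, as an element of the span. -/
noncomputable def combo {V E : Type} (l : List (ℚ × RT V E)) : Span V E :=
  (l.map fun p => p.1 • bas p.2).sum

mutual
/-- List of the graftings of `σ` on each vertex of a tree, via a new `a`-edge. -/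
def graftT {V E : Type} (a : E) (σ : RT V E) : RT V E → List (RT V E)
  | .node v l => .node v ((a, σ) :: l) :: (graftL a σ l).map (.node v)
/-- Auxiliary: graftings of `σ` inside one of the listed subtrees. -/
def graftL {V E : Type} (a : E) (σ : RT V E) :
    List (E × RT V E) → List (List (E × RT V E))
  | [] => []
  | (e, t) :: r =>
      ((graftT a σ t).map fun t' => (e, t') :: r)
        ++ ((graftL a σ r).map fun r' => (e, t) :: r')
end

mutual
/-- Graftings of `σ` on each vertex of a tree via a new `a`-edge, additionally acting by
`act ω` on the decoration of the target vertex: the summands of `σ ▷^{a,ω} τ`. -/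
def graftMT {V E Ω : Type} (act : Ω → V → V) (a : E) (ω : Ω) (σ : RT V E) :
    RT V E → List (RT V E)
  | .node v l => .node (act ω v) ((a, σ) :: l) :: (graftML act a ω σ l).map (.node v)
/-- Auxiliary: graftings of `σ` inside one of the listed subtrees. -/
def graftML {V E Ω : Type} (act : Ω → V → V) (a : E) (ω : Ω) (σ : RT V E) :
    List (E × RT V E) → List (List (E × RT V E))
  | [] => []
  | (e, t) :: r =>
      ((graftMT act a ω σ t).map fun t' => (e, t') :: r)
        ++ ((graftML act a ω σ r).map fun r' => (e, t) :: r')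
end

mutual
/-- The summands of the operator `↑^ω τ = Σ_{v ∈ N_τ} ↑_v^ω τ`, which acts by
`act ω` on the decoration of a single vertex `v`. -/
def upT {V E Ω : Type} (act : Ω → V → V) (ω : Ω) : RT V E → List (RT V E)
  | .node v l => .node (act ω v) l :: (upL act ω l).map (.node v)
/-- Auxiliary: the operator `↑_v^ω` applied at vertices inside the listed subtrees. -/
def upL {V E Ω : Type} (act : Ω → V → V) (ω : Ω) :
    List (E × RT V E) → List (List (E × RT V E))
  | [] => []
  | (e, t) :: r =>
      ((upT act ω t).map fun t' => (e, t') :: r)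
        ++ ((upL act ω r).map fun r' => (e, t) :: r')
end

/-!
Before linearization both identities are equalities of multisets of trees, proved by structural
induction. Applying `↑^ω` to a summand of `σ ▷^{a,ω'} τ` either acts inside the grafted copy of `σ`
or at a vertex of `τ`; at the target vertex of the grafting the decoration receives both `ω` and
`ω'`, in an order that does not matter because the two actions commute. Linearity in each argument
then transports the multiset identities to the span.
-/

section TreeMultisets
open Multiset

variable {V E Ω : Type} {act : Ω → V → V} {ω ω' : Ω}

mutual
theorem upT_bind_upT_comm (h : Function.Commute (act ω) (act ω')) (τ : RT V E) :
    ((upT act ω' τ : Multiset (RT V E)).bind fun t => (upT act ω t : Multiset (RT V E)))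
      = (upT act ω τ : Multiset (RT V E)).bind fun t => (upT act ω' t : Multiset (RT V E)) := by
  match τ with
  | .node v l =>
    have hL := upL_bind_upL_comm h l
    simp only [upT, ← map_coe, ← cons_coe, cons_bind, Multiset.bind_map, bind_cons,
      ← Multiset.map_bind, hL, h v]
    simp only [← singleton_add]
    abel

theorem upL_bind_upL_comm (h : Function.Commute (act ω) (act ω'))
    (l : List (E × RT V E)) :
    ((upL act ω' l : Multiset (List (E × RT V E))).bind fun m =>
        (upL act ω m : Multiset (List (E × RT V E))))
      = (upL act ω l : Multiset (List (E × RT V E))).bind fun m =>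
        (upL act ω' m : Multiset (List (E × RT V E))) := by
  match l with
  | [] => simp [upL]
  | (e, t) :: r =>
    have hT := upT_bind_upT_comm h t
    have hR := upL_bind_upL_comm h r
    simp only [upL, ← map_coe, ← coe_add, add_bind, Multiset.bind_map, bind_add,
      ← Multiset.map_bind, hT, hR]
    rw [bind_map_comm (upL act ω' r : Multiset (List (E × RT V E))),
      bind_map_comm (upL act ω r : Multiset (List (E × RT V E)))]
    abel
end

mutual
theorem graftMT_bind_upT (h : Function.Commute (act ω) (act ω')) (a : E) (σ τ : RT V E) :
    ((graftMT act a ω' σ τ : Multiset (RT V E)).bind fun t => (upT act ω t : Multiset (RT V E)))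
      = ((upT act ω σ : Multiset (RT V E)).bind fun s =>
          (graftMT act a ω' s τ : Multiset (RT V E)))
        + (upT act ω τ : Multiset (RT V E)).bind fun t =>
          (graftMT act a ω' σ t : Multiset (RT V E)) := by
  match τ with
  | .node v l =>
    have hL := graftML_bind_upL h a σ l
    simp only [graftMT, upT, upL, ← map_coe, ← cons_coe, ← coe_add, cons_bind,
      Multiset.bind_map, bind_cons, ← Multiset.map_bind, map_add, map_map, Function.comp_def,
      hL, h v]
    simp only [← singleton_add]
    abel

theorem graftML_bind_upL (h : Function.Commute (act ω) (act ω')) (a : E)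
    (σ : RT V E) (l : List (E × RT V E)) :
    ((graftML act a ω' σ l : Multiset (List (E × RT V E))).bind fun m =>
        (upL act ω m : Multiset (List (E × RT V E))))
      = ((upT act ω σ : Multiset (RT V E)).bind fun s =>
          (graftML act a ω' s l : Multiset (List (E × RT V E))))
        + (upL act ω l : Multiset (List (E × RT V E))).bind fun m =>
          (graftML act a ω' σ m : Multiset (List (E × RT V E))) := by
  match l with
  | [] => simp [graftML, upL]
  | (e, t) :: r =>
    have hT := graftMT_bind_upT h a σ t
    have hR := graftML_bind_upL h a σ r
    simp only [graftML, upL, ← map_coe, ← coe_add, add_bind, Multiset.bind_map, bind_add,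
      ← Multiset.map_bind, map_add, hT, hR]
    -- the cross terms, where `↑^ω` and the grafting act in different children of the root
    rw [bind_map_comm (graftML act a ω' σ r : Multiset (List (E × RT V E))),
      bind_map_comm (upL act ω r : Multiset (List (E × RT V E)))]
    abel
end

end TreeMultisets

section LinearExtension
variable {V E V' E' : Type}

noncomputable def ofMultiset (s : Multiset (RT V E)) : Span V E := (s.map bas).sum

theorem ofList_eq_ofMultiset (l : List (RT V E)) :
    ofList l = ofMultiset (l : Multiset (RT V E)) := by
  simp [ofList, ofMultiset]

theorem ofMultiset_add (s t : Multiset (RT V E)) :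
    ofMultiset (s + t) = ofMultiset s + ofMultiset t := by
  simp [ofMultiset]

theorem LinearMap.map_ofMultiset_bind (F : Span V E →ₗ[ℚ] Span V' E')
    {f : RT V E → List (RT V' E')}
    (hF : ∀ t, F (bas t) = ofList (f t)) (s : Multiset (RT V E)) :
    F (ofMultiset s) = ofMultiset (s.bind fun t => (f t : Multiset (RT V' E'))) := by
  simp only [ofMultiset, map_multiset_sum, Multiset.map_map, Multiset.map_bind, Multiset.sum_bind]
  congr 1
  exact Multiset.map_congr rfl fun t _ => by simp [hF t, ofList_eq_ofMultiset, ofMultiset]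

theorem Span.linearMap_ext {M : Type*} [AddCommMonoid M] [Module ℚ M]
    {F G : Span V E →ₗ[ℚ] M}
    (h : ∀ t, F (bas t) = G (bas t)) : F = G :=
  Finsupp.lhom_ext' fun q => LinearMap.ext_ring <| by
    obtain ⟨t, rfl⟩ := Quot.exists_rep q
    exact h t

theorem Span.bilinMap_ext {M : Type*} [AddCommMonoid M] [Module ℚ M]
    {F G : Span V E →ₗ[ℚ] Span V E →ₗ[ℚ] M}
    (h : ∀ σ τ, F (bas σ) (bas τ) = G (bas σ) (bas τ)) : F = G :=
  Span.linearMap_ext fun σ => Span.linearMap_ext fun τ => h σ τ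

end LinearExtension

section Operators
variable {V E Ω : Type} {act : Ω → V → V} {ω ω' : Ω}

theorem leibniz_of_upT_graftMT (h : Function.Commute (act ω) (act ω')) {a : E}
    {U : Span V E →ₗ[ℚ] Span V E} (hU : ∀ τ, U (bas τ) = ofList (upT act ω τ))
    {G : Span V E →ₗ[ℚ] Span V E →ₗ[ℚ] Span V E}
    (hG : ∀ σ τ, G (bas σ) (bas τ) = ofList (graftMT act a ω' σ τ)) (x y : Span V E) :
    U (G x y) = G (U x) y + G x (U y) := by
  suffices G.compr₂ U = G.comp U + G.compl₂ U from LinearMap.congr_fun₂ this x y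
  refine Span.bilinMap_ext fun σ τ => ?_
  have hGτ : ∀ s, G.flip (bas τ) (bas s) = ofList (graftMT act a ω' s τ) := (hG · τ)
  simp only [LinearMap.compr₂_apply, LinearMap.add_apply, LinearMap.comp_apply,
    LinearMap.compl₂_apply, hG, hU, ofList_eq_ofMultiset]
  rw [U.map_ofMultiset_bind hU, graftMT_bind_upT h, ofMultiset_add,
    ← (G.flip (bas τ)).map_ofMultiset_bind hGτ, ← (G (bas σ)).map_ofMultiset_bind (hG σ),
    LinearMap.flip_apply]

theorem apply_comm_of_upT (h : Function.Commute (act ω) (act ω'))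
    {U U' : Span V E →ₗ[ℚ] Span V E} (hU : ∀ τ, U (bas τ) = ofList (upT act ω τ))
    (hU' : ∀ τ, U' (bas τ) = ofList (upT act ω' τ)) (x : Span V E) :
    U (U' x) = U' (U x) := by
  suffices U.comp U' = U'.comp U from LinearMap.congr_fun this x
  refine Span.linearMap_ext fun τ => ?_
  simp only [LinearMap.comp_apply, hU, hU', ofList_eq_ofMultiset]
  rw [U.map_ofMultiset_bind hU, U'.map_ofMultiset_bind hU', upT_bind_upT_comm h]

end Operators

/-- **`(↑^ω)` is a family of commuting derivations for the products `▷^{a,ω'}`.**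
Take `V = S × Ω` with `Ω` a commutative monoid acting by `ω·(s,ω') = (s, ω*ω')`.  Let
`U ω` be the linear extension of `↑^ω := Σ_{v} ↑_v^ω` and `g a ω'` the bilinear extension
of the grafting `▷^{a,ω'}` to the span of decorated rooted trees.  Then
`↑^ω (σ ▷^{a,ω'} τ) = (↑^ω σ) ▷^{a,ω'} τ + σ ▷^{a,ω'} (↑^ω τ)` and
`↑^ω ∘ ↑^{ω'} = ↑^{ω'} ∘ ↑^ω`. -/
theorem up_commuting_derivations {S E Ω : Type} [CommMonoid Ω]
    (U : Ω → Span (S × Ω) E →ₗ[ℚ] Span (S × Ω) E)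
    (hU : ∀ (ω : Ω) (τ : RT (S × Ω) E),
      U ω (bas τ) = ofList (upT (fun ω p => (p.1, ω * p.2)) ω τ))
    (g : E → Ω → Span (S × Ω) E →ₗ[ℚ] Span (S × Ω) E →ₗ[ℚ] Span (S × Ω) E)
    (hg : ∀ (a : E) (ω' : Ω) (σ τ : RT (S × Ω) E),
      g a ω' (bas σ) (bas τ)
        = ofList (graftMT (fun ω p => (p.1, ω * p.2)) a ω' σ τ)) :
    (∀ (ω ω' : Ω) (a : E) (x y : Span (S × Ω) E),
        U ω (g a ω' x y) = g a ω' (U ω x) y + g a ω' x (U ω y)) ∧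
    (∀ (ω ω' : Ω) (x : Span (S × Ω) E), U ω (U ω' x) = U ω' (U ω x)) := by
  have hcomm : ∀ ω ω' : Ω, Function.Commute (fun p : S × Ω => (p.1, ω * p.2))
      (fun p => (p.1, ω' * p.2)) := fun ω ω' p => by simp only [mul_left_comm]
  exact ⟨fun ω ω' a => leibniz_of_upT_graftMT (hcomm ω ω') (hU ω) (hg a ω'),
    fun ω ω' => apply_comm_of_upT (hcomm ω ω') (hU ω) (hU ω')⟩
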